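/- arXiv:2402.09568 — 2 statements merged into one kernel-verified Lean document; each statement's English description precedes it below -/
import Mathlib

section
/- Let n and k be positive integers and z a k-coloring of {1,…,n}, and suppose κ := #{i ∈ {1,…,k} : |z^{-1}(i)| ≥ 2} satisfies κ ≥ 3. Then every simple-graph Markov basis B for DC_{n,z} contains an element γ with ‖γ‖₁ = 2κ. -/
open Finset

/-- The set `P` of 2-element subsets of `{1,…,n}`, encoded as ordered pairs. -/
abbrev Edge (n : ℕ) : Type := {p : Fin n × Fin n // p.1 < p.2}

/-- Entry `γ_{uv}` of a vector `γ ∈ ℤ^P` at the unordered pair `{u,v}` (0 when `u = v`). -/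
def ent {n : ℕ} (γ : Edge n → ℤ) (u v : Fin n) : ℤ :=
  if h : u < v then γ ⟨(u, v), h⟩ else if h : v < u then γ ⟨(v, u), h⟩ else 0

/-- Entry at `{u,v}` of a vector in `ℕ^P`. -/
def entN {n : ℕ} (x : Edge n → ℕ) (u v : Fin n) : ℕ :=
  if h : u < v then x ⟨(u, v), h⟩ else if h : v < u then x ⟨(v, u), h⟩ else 0

/-- Degree sequence: `d(γ)_u = ∑_{v ≠ u} γ_{uv}`. -/
def degSeq {n : ℕ} (γ : Edge n → ℤ) (u : Fin n) : ℤ := ∑ v, ent γ u v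

/-- Color sequence: `c(γ)_{ij} = ∑ γ_{uv}` over `{u,v} ∈ P` with `{z u, z v} = {i,j}`. -/
def colorSeq {n k : ℕ} (z : Fin n → Fin k) (γ : Edge n → ℤ) (i j : Fin k) : ℤ :=
  ∑ e : Edge n,
    if (z e.1.1 = i ∧ z e.1.2 = j) ∨ (z e.1.1 = j ∧ z e.1.2 = i) then γ e else 0

/-- `γ ∈ ker_ℤ DC_{n,z}`: both the degree sequence and the color sequence vanish. -/
def inKer {n k : ℕ} (z : Fin n → Fin k) (γ : Edge n → ℤ) : Prop :=
  (∀ u, degSeq γ u = 0) ∧ ∀ i j, colorSeq z γ i j = 0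

/-- The 1-norm `‖γ‖₁ = ∑_{e ∈ P} |γ_e|`. -/
def norm1 {n : ℕ} (γ : Edge n → ℤ) : ℤ := ∑ e, |γ e|

/-- The set of moves `M_{n,z} = {γ ∈ ker_ℤ DC_{n,z} : ‖γ‖₁ = 4}`. -/
def MSet {n k : ℕ} (z : Fin n → Fin k) : Set (Edge n → ℤ) :=
  {γ | inKer z γ ∧ norm1 γ = 4}

/-- Degree sequence of a vector in `ℕ^P`. -/
def degSeqN {n : ℕ} (x : Edge n → ℕ) (u : Fin n) : ℕ := ∑ v, entN x u v

/-- Color sequence of a vector in `ℕ^P`. -/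
def colorSeqN {n k : ℕ} (z : Fin n → Fin k) (x : Edge n → ℕ) (i j : Fin k) : ℕ :=
  ∑ e : Edge n,
    if (z e.1.1 = i ∧ z e.1.2 = j) ∨ (z e.1.1 = j ∧ z e.1.2 = i) then x e else 0

/-- The fiber `F(b) = {x ∈ ℕ^P : DC_{n,z} x = b}`, where `b = (d; c)`. -/
def Fiber {n k : ℕ} (z : Fin n → Fin k) (d : Fin n → ℤ) (c : Fin k → Fin k → ℤ) :
    Set (Edge n → ℕ) :=
  {x | (∀ u, (degSeqN x u : ℤ) = d u) ∧ ∀ i j, (colorSeqN z x i j : ℤ) = c i j}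

/-- The simple fiber `F̃(b) = F(b) ∩ {0,1}^P`. -/
def SimpleFiber {n k : ℕ} (z : Fin n → Fin k) (d : Fin n → ℤ) (c : Fin k → Fin k → ℤ) :
    Set (Edge n → ℕ) :=
  {x | x ∈ Fiber z d c ∧ ∀ e, x e ≤ 1}

/-- The difference `x − x' ∈ ℤ^P` of two vectors in `ℕ^P`. -/
def diff {n : ℕ} (x x' : Edge n → ℕ) : Edge n → ℤ := fun e => (x e : ℤ) - (x' e : ℤ)

/-- `B` is a simple-graph Markov basis for `DC_{n,z}`: `B` is a finite subset of the kernel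
and for every right-hand side `b = (d; c)` the graph on the simple fiber whose edges are
given by differences in `±B` is connected. -/
def IsSimpleMarkovBasis {n k : ℕ} (z : Fin n → Fin k) (B : Set (Edge n → ℤ)) : Prop :=
  B.Finite ∧ (∀ γ ∈ B, inKer z γ) ∧
    ∀ (d : Fin n → ℤ) (c : Fin k → Fin k → ℤ),
      ∀ x ∈ SimpleFiber z d c, ∀ x' ∈ SimpleFiber z d c,
        Relation.ReflTransGen
          (fun a b : Edge n → ℕ => a ∈ SimpleFiber z d c ∧ b ∈ SimpleFiber z d c ∧
            (diff a b ∈ B ∨ diff b a ∈ B)) x x'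


-- basic entN lemmas
theorem entN_eq {n : ℕ} (x : Edge n → ℕ) {u v : Fin n} (h : u < v) :
    entN x u v = x ⟨(u, v), h⟩ := by simp [entN, h]

theorem entN_self {n : ℕ} (x : Edge n → ℕ) (u : Fin n) : entN x u u = 0 := by
  simp [entN, lt_irrefl]

theorem entN_comm {n : ℕ} (x : Edge n → ℕ) (u v : Fin n) : entN x u v = entN x v u := by
  rcases lt_trichotomy u v with h | h | h
  · rw [entN, entN, dif_pos h, dif_neg (asymm h), dif_pos h]
  · subst h; rfl
  · rw [entN, entN, dif_pos h, dif_neg (asymm h), dif_pos h]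

noncomputable def mkE {n : ℕ} (u v : Fin n) (h : u ≠ v) : Edge n :=
  if h' : u < v then ⟨(u, v), h'⟩ else ⟨(v, u), by
    rcases lt_trichotomy u v with h2 | h2 | h2
    · exact absurd h2 h'
    · exact absurd h2 h
    · exact h2⟩

theorem entN_mkE {n : ℕ} (x : Edge n → ℕ) {u v : Fin n} (h : u ≠ v) :
    x (mkE u v h) = entN x u v := by
  unfold mkE entN
  split_ifs with h1 h2
  · rfl
  · rfl
  · rcases lt_trichotomy u v with h3 | h3 | h3 <;> first | exact absurd h3 h1 | exact absurd h3 h | exact absurd h3 h2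

theorem mkE_comm {n : ℕ} {u v : Fin n} (h : u ≠ v) : mkE u v h = mkE v u h.symm := by
  unfold mkE
  rcases lt_trichotomy u v with h2 | h2 | h2
  · rw [dif_pos h2, dif_neg (asymm h2)]
  · exact absurd h2 h
  · rw [dif_neg (asymm h2), dif_pos h2]

theorem edge_eq_mkE {n : ℕ} (e : Edge n) : e = mkE e.1.1 e.1.2 (ne_of_lt e.2) := by
  rw [mkE, dif_pos e.2]

theorem mkE_eq_iff {n : ℕ} {u v u' v' : Fin n} (h : u ≠ v) (h' : u' ≠ v') :
    mkE u v h = mkE u' v' h' ↔ (u = u' ∧ v = v') ∨ (u = v' ∧ v = u') := by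
  constructor
  · intro heq
    have hval := congrArg (fun e : Edge n => e.1) heq
    unfold mkE at hval
    split_ifs at hval <;> simp only [Prod.ext_iff] at hval <;> tauto
  · rintro (⟨rfl, rfl⟩ | ⟨rfl, rfl⟩)
    · rfl
    · exact mkE_comm h

section Pattern

variable {n k κ : ℕ}

/-- Pattern conditions -/
def condAA (a : ZMod κ → Fin n) (u v : Fin n) : Prop :=
  ∃ t, (u = a t ∧ v = a (t+1)) ∨ (u = a (t+1) ∧ v = a t)

def condAB (a b : ZMod κ → Fin n) (u v : Fin n) : Prop :=
  ∃ t, (u = a t ∧ v = b (t+1)) ∨ (v = a t ∧ u = b (t+1))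

def condBA (a b : ZMod κ → Fin n) (u v : Fin n) : Prop :=
  ∃ t, (u = b t ∧ v = a (t+1)) ∨ (v = b t ∧ u = a (t+1))

def condBB (b : ZMod κ → Fin n) (u v : Fin n) : Prop :=
  ∃ t, (u = b t ∧ v = b (t+1)) ∨ (u = b (t+1) ∧ v = b t)

theorem condAA_comm (a : ZMod κ → Fin n) (u v : Fin n) : condAA a u v ↔ condAA a v u :=
  exists_congr fun _ => by tauto

theorem condAB_comm (a b : ZMod κ → Fin n) (u v : Fin n) : condAB a b u v ↔ condAB a b v u :=
  exists_congr fun _ => by tauto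

theorem condBA_comm (a b : ZMod κ → Fin n) (u v : Fin n) : condBA a b u v ↔ condBA a b v u :=
  exists_congr fun _ => by tauto

theorem condBB_comm (b : ZMod κ → Fin n) (u v : Fin n) : condBB b u v ↔ condBB b v u :=
  exists_congr fun _ => by tauto

open scoped Classical in
noncomputable def patA (a b : ZMod κ → Fin n) (p q r s : ℕ) (u v : Fin n) : ℕ :=
  if condAA a u v then p
  else if condAB a b u v then q
  else if condBA a b u v then r
  else if condBB b u v then s
  else 0

theorem patA_comm (a b : ZMod κ → Fin n) (p q r s : ℕ) (u v : Fin n) :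
    patA a b p q r s u v = patA a b p q r s v u := by
  unfold patA
  rw [iff_iff_eq.mp (condAA_comm a u v), iff_iff_eq.mp (condAB_comm a b u v),
    iff_iff_eq.mp (condBA_comm a b u v), iff_iff_eq.mp (condBB_comm b u v)]

noncomputable def patX (a b : ZMod κ → Fin n) (p q r s : ℕ) : Edge n → ℕ :=
  fun e => patA a b p q r s e.1.1 e.1.2

open scoped Classical in
noncomputable def dFun (a b : ZMod κ → Fin n) : Fin n → ℤ :=
  fun u => if ∃ t, u = a t then 3 else if ∃ t, u = b t then 1 else 0

open scoped Classical in
noncomputable def cFun (σ : ZMod κ → Fin k) : Fin k → Fin k → ℤ :=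
  fun i j => if ∃ t, (i = σ t ∧ j = σ (t+1)) ∨ (j = σ t ∧ i = σ (t+1)) then 2 else 0

/-- All the assumptions on the chosen representatives. -/
structure Good (n k κ : ℕ) (z : Fin n → Fin k) (σ : ZMod κ → Fin k)
    (a b : ZMod κ → Fin n) : Prop where
  hκ : 3 ≤ κ
  hσ : Function.Injective σ
  hza : ∀ t, z (a t) = σ t
  hzb : ∀ t, z (b t) = σ t
  hab : ∀ t, a t ≠ b t

namespace Good

variable {z : Fin n → Fin k} {σ : ZMod κ → Fin k} {a b : ZMod κ → Fin n}

theorem nz (G : Good n k κ z σ a b) : NeZero κ := ⟨by have := G.hκ; omega⟩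

theorem cast_ne_zero (G : Good n k κ z σ a b) {c : ℕ} (h1 : 0 < c) (h2 : c < 3) :
    (c : ZMod κ) ≠ 0 := by
  haveI := G.nz
  rw [Ne, ZMod.natCast_eq_zero_iff]
  intro hd
  have := Nat.le_of_dvd h1 hd
  have := G.hκ
  omega

theorem one_ne_zero' (G : Good n k κ z σ a b) : (1 : ZMod κ) ≠ 0 := by
  have := G.cast_ne_zero (c := 1) one_pos (by omega); simpa using this

theorem two_ne_zero' (G : Good n k κ z σ a b) : (2 : ZMod κ) ≠ 0 := by
  have := G.cast_ne_zero (c := 2) two_pos (by omega); simpa using this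

theorem shift_ne (G : Good n k κ z σ a b) (t : ZMod κ) : t + 1 ≠ t := by
  intro h
  exact G.one_ne_zero' (by linear_combination h - t)

theorem shift2_ne (G : Good n k κ z σ a b) (t : ZMod κ) : t + 2 ≠ t := by
  intro h
  exact G.two_ne_zero' (by linear_combination h - t)

theorem a_inj (G : Good n k κ z σ a b) : Function.Injective a := fun t t' h => by
  apply G.hσ; rw [← G.hza, ← G.hza, h]

theorem b_inj (G : Good n k κ z σ a b) : Function.Injective b := fun t t' h => by
  apply G.hσ; rw [← G.hzb, ← G.hzb, h]

theorem ab_ne' (G : Good n k κ z σ a b) (t t' : ZMod κ) : a t ≠ b t' := by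
  intro h
  have h2 : σ t = σ t' := by rw [← G.hza, ← G.hzb, h]
  have h3 := G.hσ h2
  subst h3
  exact G.hab t h

end Good

end Pattern

namespace Good

variable {n k κ : ℕ} {z : Fin n → Fin k} {σ : ZMod κ → Fin k} {a b : ZMod κ → Fin n}

theorem a_ne_a (G : Good n k κ z σ a b) {s t : ZMod κ} (h : s ≠ t) : a s ≠ a t :=
  fun h' => h (G.a_inj h')

theorem b_ne_b (G : Good n k κ z σ a b) {s t : ZMod κ} (h : s ≠ t) : b s ≠ b t :=
  fun h' => h (G.b_inj h')

theorem ba_ne' (G : Good n k κ z σ a b) (t t' : ZMod κ) : b t ≠ a t' :=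
  (G.ab_ne' t' t).symm

theorem sub_one_ne_add_one (G : Good n k κ z σ a b) (t : ZMod κ) : t - 1 ≠ t + 1 :=
  fun h => G.shift2_ne (t - 1) (by rw [show (t-1)+2 = t+1 by ring, ← h])

theorem patA_self (G : Good n k κ z σ a b) (p q r s : ℕ) (u : Fin n) :
    patA a b p q r s u u = 0 := by
  unfold patA
  rw [if_neg, if_neg, if_neg, if_neg]
  · rintro ⟨t, ⟨h1, h2⟩ | ⟨h1, h2⟩⟩ <;>
      first
      | exact G.b_ne_b (G.shift_ne t).symm (h1.symm.trans h2)
      | exact G.b_ne_b (G.shift_ne t) (h1.symm.trans h2)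
  · rintro ⟨t, ⟨h1, h2⟩ | ⟨h1, h2⟩⟩ <;>
      first
      | exact G.ab_ne' t (t+1) (h1.symm.trans h2)
      | exact G.ba_ne' t (t+1) (h1.symm.trans h2)
  · rintro ⟨t, ⟨h1, h2⟩ | ⟨h1, h2⟩⟩ <;>
      first
      | exact G.ab_ne' t (t+1) (h1.symm.trans h2)
      | exact G.ab_ne' t (t+1) (h2.symm.trans h1)
  · rintro ⟨t, ⟨h1, h2⟩ | ⟨h1, h2⟩⟩ <;>
      first
      | exact G.a_ne_a (G.shift_ne t).symm (h1.symm.trans h2)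
      | exact G.a_ne_a (G.shift_ne t) (h1.symm.trans h2)

theorem entN_patX (G : Good n k κ z σ a b) (p q r s : ℕ) (u v : Fin n) :
    entN (patX a b p q r s) u v = patA a b p q r s u v := by
  rcases lt_trichotomy u v with h | h | h
  · rw [entN_eq _ h]; rfl
  · subst h; rw [entN_self, G.patA_self]
  · rw [entN_comm, entN_eq _ h]
    exact (patA_comm a b p q r s u v).symm

theorem patA_aa (G : Good n k κ z σ a b) (p q r s : ℕ) (t : ZMod κ) :
    patA a b p q r s (a t) (a (t+1)) = p :=
  if_pos ⟨t, Or.inl ⟨rfl, rfl⟩⟩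

theorem patA_ab (G : Good n k κ z σ a b) (p q r s : ℕ) (t : ZMod κ) :
    patA a b p q r s (a t) (b (t+1)) = q := by
  unfold patA
  rw [if_neg, if_pos ⟨t, Or.inl ⟨rfl, rfl⟩⟩]
  rintro ⟨s', ⟨h1, h2⟩ | ⟨h1, h2⟩⟩ <;> first
    | exact G.ba_ne' _ _ h2
    | exact G.ba_ne' _ _ h2.symm

theorem patA_ba (G : Good n k κ z σ a b) (p q r s : ℕ) (t : ZMod κ) :
    patA a b p q r s (b t) (a (t+1)) = r := by
  unfold patA
  rw [if_neg, if_neg, if_pos ⟨t, Or.inl ⟨rfl, rfl⟩⟩]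
  · rintro ⟨s', ⟨h1, h2⟩ | ⟨h1, h2⟩⟩
    · exact G.ba_ne' _ _ h1
    · have hs : s' = t + 1 := G.a_inj h1.symm
      subst hs
      exact G.b_ne_b (G.shift2_ne t).symm (by rw [show t+1+1 = t+2 by ring] at h2; exact h2)
  · rintro ⟨s', ⟨h1, h2⟩ | ⟨h1, h2⟩⟩ <;> exact G.ba_ne' _ _ h1

theorem patA_bb (G : Good n k κ z σ a b) (p q r s : ℕ) (t : ZMod κ) :
    patA a b p q r s (b t) (b (t+1)) = s := by
  unfold patA
  rw [if_neg, if_neg, if_neg, if_pos ⟨t, Or.inl ⟨rfl, rfl⟩⟩]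
  · rintro ⟨s', ⟨h1, h2⟩ | ⟨h1, h2⟩⟩ <;> exact G.ba_ne' _ _ h2
  · rintro ⟨s', ⟨h1, h2⟩ | ⟨h1, h2⟩⟩ <;> first
      | exact G.ba_ne' _ _ h1
      | exact G.ba_ne' _ _ h2
  · rintro ⟨s', ⟨h1, h2⟩ | ⟨h1, h2⟩⟩ <;> exact G.ba_ne' _ _ h1

/-- Neighbors of `a t`. -/
theorem neighbor_a (G : Good n k κ z σ a b) {p q r s : ℕ} {t : ZMod κ} {v : Fin n}
    (h : patA a b p q r s (a t) v ≠ 0) :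
    v = a (t-1) ∨ v = b (t-1) ∨ v = a (t+1) ∨ v = b (t+1) := by
  unfold patA at h
  split_ifs at h with h1 h2 h3 h4
  · rcases h1 with ⟨s', ⟨hx1, hx2⟩ | ⟨hx1, hx2⟩⟩
    · have he : s' = t := G.a_inj hx1.symm
      subst he; exact Or.inr (Or.inr (Or.inl hx2))
    · have he : s' + 1 = t := G.a_inj hx1.symm
      subst he; left; rw [hx2]; congr 1; ring
  · rcases h2 with ⟨s', ⟨hx1, hx2⟩ | ⟨hx1, hx2⟩⟩
    · have he : s' = t := G.a_inj hx1.symm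
      subst he; exact Or.inr (Or.inr (Or.inr hx2))
    · exact absurd hx2 (G.ab_ne' _ _)
  · rcases h3 with ⟨s', ⟨hx1, hx2⟩ | ⟨hx1, hx2⟩⟩
    · exact absurd hx1 (G.ab_ne' _ _)
    · have he : s' + 1 = t := G.a_inj hx2.symm
      subst he; right; left; rw [hx1]; congr 1; ring
  · rcases h4 with ⟨s', ⟨hx1, hx2⟩ | ⟨hx1, hx2⟩⟩ <;> exact absurd hx1 (G.ab_ne' _ _)
  · exact absurd rfl h

end Good

namespace Good

variable {n k κ : ℕ} {z : Fin n → Fin k} {σ : ZMod κ → Fin k} {a b : ZMod κ → Fin n}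

theorem neighbor_b (G : Good n k κ z σ a b) {p q r s : ℕ} {t : ZMod κ} {v : Fin n}
    (h : patA a b p q r s (b t) v ≠ 0) :
    v = a (t-1) ∨ v = b (t-1) ∨ v = a (t+1) ∨ v = b (t+1) := by
  unfold patA at h
  split_ifs at h with h1 h2 h3 h4
  · rcases h1 with ⟨s', ⟨hx1, hx2⟩ | ⟨hx1, hx2⟩⟩ <;> exact absurd hx1 (G.ba_ne' _ _)
  · rcases h2 with ⟨s', ⟨hx1, hx2⟩ | ⟨hx1, hx2⟩⟩
    · exact absurd hx1 (G.ba_ne' _ _)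
    · have he : s' + 1 = t := G.b_inj hx2.symm
      subst he; left; rw [hx1]; congr 1; ring
  · rcases h3 with ⟨s', ⟨hx1, hx2⟩ | ⟨hx1, hx2⟩⟩
    · have he : s' = t := G.b_inj hx1.symm
      subst he; exact Or.inr (Or.inr (Or.inl hx2))
    · exact absurd hx2 (G.ba_ne' _ _)
  · rcases h4 with ⟨s', ⟨hx1, hx2⟩ | ⟨hx1, hx2⟩⟩
    · have he : s' = t := G.b_inj hx1.symm
      subst he; exact Or.inr (Or.inr (Or.inr hx2))
    · have he : s' + 1 = t := G.b_inj hx1.symm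
      subst he; right; left; rw [hx2]; congr 1; ring
  · exact absurd rfl h

theorem patA_other (G : Good n k κ z σ a b) {p q r s : ℕ} {u : Fin n}
    (hu1 : ∀ t', u ≠ a t') (hu2 : ∀ t', u ≠ b t') (v : Fin n) :
    patA a b p q r s u v = 0 := by
  unfold patA
  rw [if_neg, if_neg, if_neg, if_neg]
  · rintro ⟨t, ⟨hx1, hx2⟩ | ⟨hx1, hx2⟩⟩ <;> first | exact hu2 _ hx1 | exact hu1 _ hx1
  · rintro ⟨t, ⟨hx1, hx2⟩ | ⟨hx1, hx2⟩⟩ <;> first | exact hu2 _ hx1 | exact hu1 _ hx2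
  · rintro ⟨t, ⟨hx1, hx2⟩ | ⟨hx1, hx2⟩⟩ <;> first | exact hu1 _ hx1 | exact hu2 _ hx2
  · rintro ⟨t, ⟨hx1, hx2⟩ | ⟨hx1, hx2⟩⟩ <;> first | exact hu1 _ hx1 | exact hu1 _ hx2

/-- Sum of a function supported on the four potential neighbors. -/
theorem sum_T (G : Good n k κ z σ a b) (t : ZMod κ) (f : Fin n → ℕ)
    (hz : ∀ v, v ∉ ({a (t-1), b (t-1), a (t+1), b (t+1)} : Finset (Fin n)) → f v = 0) :
    ∑ v, f v = f (a (t-1)) + f (b (t-1)) + f (a (t+1)) + f (b (t+1)) := by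
  rw [← Finset.sum_subset (Finset.subset_univ
      ({a (t-1), b (t-1), a (t+1), b (t+1)} : Finset (Fin n)))
      (fun x _ hx => hz x hx)]
  rw [show ({a (t-1), b (t-1), a (t+1), b (t+1)} : Finset (Fin n)) =
      insert (a (t-1)) (insert (b (t-1)) (insert (a (t+1)) {b (t+1)})) from rfl]
  rw [Finset.sum_insert (by
        simp only [Finset.mem_insert, Finset.mem_singleton]
        push_neg
        exact ⟨G.ab_ne' _ _, G.a_ne_a (G.sub_one_ne_add_one t), G.ab_ne' _ _⟩),
      Finset.sum_insert (by
        simp only [Finset.mem_insert, Finset.mem_singleton]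
        push_neg
        exact ⟨G.ba_ne' _ _, G.b_ne_b (G.sub_one_ne_add_one t)⟩),
      Finset.sum_insert (by
        simp only [Finset.mem_singleton]
        exact G.ab_ne' _ _),
      Finset.sum_singleton]
  ring

theorem rowsum_a (G : Good n k κ z σ a b) (p q r s : ℕ) (t : ZMod κ) :
    ∑ v, patA a b p q r s (a t) v = p + r + p + q := by
  have e1 : patA a b p q r s (a t) (a (t-1)) = p := by
    have h := G.patA_aa p q r s (t-1)
    rw [show t-1+1 = t by ring] at h
    rw [patA_comm]; exact h
  have e2 : patA a b p q r s (a t) (b (t-1)) = r := by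
    have h := G.patA_ba p q r s (t-1)
    rw [show t-1+1 = t by ring] at h
    rw [patA_comm]; exact h
  have e3 : patA a b p q r s (a t) (a (t+1)) = p := G.patA_aa p q r s t
  have e4 : patA a b p q r s (a t) (b (t+1)) = q := G.patA_ab p q r s t
  rw [G.sum_T t _ (fun v hv => by
    by_contra hne
    rcases G.neighbor_a hne with h | h | h | h <;> subst h <;> simp at hv), e1, e2, e3, e4]

theorem rowsum_b (G : Good n k κ z σ a b) (p q r s : ℕ) (t : ZMod κ) :
    ∑ v, patA a b p q r s (b t) v = q + s + r + s := by
  have e1 : patA a b p q r s (b t) (a (t-1)) = q := by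
    have h := G.patA_ab p q r s (t-1)
    rw [show t-1+1 = t by ring] at h
    rw [patA_comm]; exact h
  have e2 : patA a b p q r s (b t) (b (t-1)) = s := by
    have h := G.patA_bb p q r s (t-1)
    rw [show t-1+1 = t by ring] at h
    rw [patA_comm]; exact h
  have e3 : patA a b p q r s (b t) (a (t+1)) = r := G.patA_ba p q r s t
  have e4 : patA a b p q r s (b t) (b (t+1)) = s := G.patA_bb p q r s t
  rw [G.sum_T t _ (fun v hv => by
    by_contra hne
    rcases G.neighbor_b hne with h | h | h | h <;> subst h <;> simp at hv), e1, e2, e3, e4]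

theorem aa1_ne (G : Good n k κ z σ a b) (t : ZMod κ) : a t ≠ a (t+1) :=
  G.a_ne_a (G.shift_ne t).symm

theorem bb1_ne (G : Good n k κ z σ a b) (t : ZMod κ) : b t ≠ b (t+1) :=
  G.b_ne_b (G.shift_ne t).symm

/-- Sum of a function on edges supported on the four gap edges. -/
theorem sum_four (G : Good n k κ z σ a b) (t : ZMod κ) (f : Edge n → ℕ)
    (hz : ∀ e : Edge n, e ≠ mkE (a t) (a (t+1)) (G.aa1_ne t) →
        e ≠ mkE (a t) (b (t+1)) (G.ab_ne' _ _) →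
        e ≠ mkE (b t) (a (t+1)) (G.ba_ne' _ _) →
        e ≠ mkE (b t) (b (t+1)) (G.bb1_ne t) → f e = 0) :
    ∑ e, f e = f (mkE (a t) (a (t+1)) (G.aa1_ne t)) + f (mkE (a t) (b (t+1)) (G.ab_ne' _ _))
      + f (mkE (b t) (a (t+1)) (G.ba_ne' _ _)) + f (mkE (b t) (b (t+1)) (G.bb1_ne t)) := by
  classical
  set e1 := mkE (a t) (a (t+1)) (G.aa1_ne t) with he1
  set e2 := mkE (a t) (b (t+1)) (G.ab_ne' _ _) with he2
  set e3 := mkE (b t) (a (t+1)) (G.ba_ne' _ _) with he3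
  set e4 := mkE (b t) (b (t+1)) (G.bb1_ne t) with he4
  have d12 : e1 ≠ e2 := by
    rw [he1, he2, Ne, mkE_eq_iff]; rintro (⟨h1, h2⟩ | ⟨h1, h2⟩)
    · exact G.ab_ne' _ _ h2
    · exact G.ab_ne' _ _ h1
  have d13 : e1 ≠ e3 := by
    rw [he1, he3, Ne, mkE_eq_iff]; rintro (⟨h1, h2⟩ | ⟨h1, h2⟩)
    · exact G.ab_ne' _ _ h1
    · exact G.aa1_ne t h1
  have d14 : e1 ≠ e4 := by
    rw [he1, he4, Ne, mkE_eq_iff]; rintro (⟨h1, h2⟩ | ⟨h1, h2⟩)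
    · exact G.ab_ne' _ _ h1
    · exact G.ab_ne' _ _ h1
  have d23 : e2 ≠ e3 := by
    rw [he2, he3, Ne, mkE_eq_iff]; rintro (⟨h1, h2⟩ | ⟨h1, h2⟩)
    · exact G.ab_ne' _ _ h1
    · exact G.aa1_ne t h1
  have d24 : e2 ≠ e4 := by
    rw [he2, he4, Ne, mkE_eq_iff]; rintro (⟨h1, h2⟩ | ⟨h1, h2⟩)
    · exact G.ab_ne' _ _ h1
    · exact G.ab_ne' _ _ h1
  have d34 : e3 ≠ e4 := by
    rw [he3, he4, Ne, mkE_eq_iff]; rintro (⟨h1, h2⟩ | ⟨h1, h2⟩)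
    · exact G.ab_ne' _ _ h2
    · exact G.bb1_ne t h1
  have hsub : ({e1, e2, e3, e4} : Finset (Edge n)) ⊆ Finset.univ := Finset.subset_univ _
  rw [← Finset.sum_subset hsub (fun x _ hx => by
    simp only [Finset.mem_insert, Finset.mem_singleton] at hx
    push_neg at hx
    exact hz x hx.1 hx.2.1 hx.2.2.1 hx.2.2.2)]
  rw [show ({e1, e2, e3, e4} : Finset (Edge n)) =
      insert e1 (insert e2 (insert e3 {e4})) from rfl]
  rw [Finset.sum_insert (by
        simp only [Finset.mem_insert, Finset.mem_singleton]
        push_neg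
        exact ⟨d12, d13, d14⟩),
      Finset.sum_insert (by
        simp only [Finset.mem_insert, Finset.mem_singleton]
        push_neg
        exact ⟨d23, d24⟩),
      Finset.sum_insert (by simp only [Finset.mem_singleton]; exact d34),
      Finset.sum_singleton]
  ring

theorem patA_ne_zero_cases (G : Good n k κ z σ a b) {p q r s : ℕ} {u v : Fin n}
    (h : patA a b p q r s u v ≠ 0) :
    ∃ t', ((u = a t' ∨ u = b t') ∧ (v = a (t'+1) ∨ v = b (t'+1))) ∨
      ((v = a t' ∨ v = b t') ∧ (u = a (t'+1) ∨ u = b (t'+1))) := by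
  unfold patA at h
  split_ifs at h with h1 h2 h3 h4
  · rcases h1 with ⟨s', ⟨hx1, hx2⟩ | ⟨hx1, hx2⟩⟩
    · exact ⟨s', Or.inl ⟨Or.inl hx1, Or.inl hx2⟩⟩
    · exact ⟨s', Or.inr ⟨Or.inl hx2, Or.inl hx1⟩⟩
  · rcases h2 with ⟨s', ⟨hx1, hx2⟩ | ⟨hx1, hx2⟩⟩
    · exact ⟨s', Or.inl ⟨Or.inl hx1, Or.inr hx2⟩⟩
    · exact ⟨s', Or.inr ⟨Or.inl hx1, Or.inr hx2⟩⟩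
  · rcases h3 with ⟨s', ⟨hx1, hx2⟩ | ⟨hx1, hx2⟩⟩
    · exact ⟨s', Or.inl ⟨Or.inr hx1, Or.inl hx2⟩⟩
    · exact ⟨s', Or.inr ⟨Or.inr hx1, Or.inl hx2⟩⟩
  · rcases h4 with ⟨s', ⟨hx1, hx2⟩ | ⟨hx1, hx2⟩⟩
    · exact ⟨s', Or.inl ⟨Or.inr hx1, Or.inr hx2⟩⟩
    · exact ⟨s', Or.inr ⟨Or.inr hx2, Or.inr hx1⟩⟩
  · exact absurd rfl h

end Good

theorem app_eq_entN {n : ℕ} (x : Edge n → ℕ) (e : Edge n) : x e = entN x e.1.1 e.1.2 :=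
  (entN_eq x e.2).symm

theorem mkE_eq_of {n : ℕ} (e : Edge n) {u v : Fin n} (h : u ≠ v)
    (hor : (e.1.1 = u ∧ e.1.2 = v) ∨ (e.1.1 = v ∧ e.1.2 = u)) : e = mkE u v h := by
  rcases hor with ⟨h1, h2⟩ | ⟨h1, h2⟩
  · have hlt : u < v := h1 ▸ h2 ▸ e.2
    rw [mkE, dif_pos hlt]
    exact Subtype.ext (Prod.ext h1 h2)
  · have hlt : v < u := h1 ▸ h2 ▸ e.2
    rw [mkE, dif_neg (asymm hlt)]
    exact Subtype.ext (Prod.ext h1 h2)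

theorem cond_mkE {n k : ℕ} (z : Fin n → Fin k) {u v : Fin n} (h : u ≠ v) {i j : Fin k}
    (hcu : z u = i) (hcv : z v = j) :
    (z (mkE u v h).1.1 = i ∧ z (mkE u v h).1.2 = j) ∨
      (z (mkE u v h).1.1 = j ∧ z (mkE u v h).1.2 = i) := by
  unfold mkE
  split_ifs
  · exact Or.inl ⟨hcu, hcv⟩
  · exact Or.inr ⟨hcv, hcu⟩

theorem colorSeqN_symm {n k : ℕ} (z : Fin n → Fin k) (x : Edge n → ℕ) (i j : Fin k) :
    colorSeqN z x i j = colorSeqN z x j i :=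
  Finset.sum_congr rfl fun e _ => if_congr or_comm rfl rfl

namespace Good

variable {n k κ : ℕ} {z : Fin n → Fin k} {σ : ZMod κ → Fin k} {a b : ZMod κ → Fin n}

theorem gap_edge_cases (G : Good n k κ z σ a b) {p q r s : ℕ} {t : ZMod κ} {e : Edge n}
    (hcond : (z e.1.1 = σ t ∧ z e.1.2 = σ (t+1)) ∨ (z e.1.1 = σ (t+1) ∧ z e.1.2 = σ t))
    (hpa : patA a b p q r s e.1.1 e.1.2 ≠ 0) :
    e = mkE (a t) (a (t+1)) (G.aa1_ne t) ∨ e = mkE (a t) (b (t+1)) (G.ab_ne' _ _) ∨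
      e = mkE (b t) (a (t+1)) (G.ba_ne' _ _) ∨ e = mkE (b t) (b (t+1)) (G.bb1_ne t) := by
  obtain ⟨t', hcase⟩ := G.patA_ne_zero_cases hpa
  rcases hcase with ⟨hu, hv⟩ | ⟨hv, hu⟩
  · have d1 : z e.1.1 = σ t' := by
      rcases hu with h | h <;> rw [h] <;> [exact G.hza _; exact G.hzb _]
    have d2 : z e.1.2 = σ (t'+1) := by
      rcases hv with h | h <;> rw [h] <;> [exact G.hza _; exact G.hzb _]
    rcases hcond with ⟨c1, c2⟩ | ⟨c1, c2⟩
    · have ht : t' = t := G.hσ (d1.symm.trans c1)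
      subst ht
      rcases hu with hu | hu <;> rcases hv with hv | hv
      · exact Or.inl (mkE_eq_of e _ (Or.inl ⟨hu, hv⟩))
      · exact Or.inr (Or.inl (mkE_eq_of e _ (Or.inl ⟨hu, hv⟩)))
      · exact Or.inr (Or.inr (Or.inl (mkE_eq_of e _ (Or.inl ⟨hu, hv⟩))))
      · exact Or.inr (Or.inr (Or.inr (mkE_eq_of e _ (Or.inl ⟨hu, hv⟩))))
    · have h1 : t' = t + 1 := G.hσ (d1.symm.trans c1)
      have h2 : t' + 1 = t := G.hσ (d2.symm.trans c2)
      exact absurd (by rw [show t + 2 = t' + 1 by rw [h1]; ring, h2]) (G.shift2_ne t)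
  · have d1 : z e.1.2 = σ t' := by
      rcases hv with h | h <;> rw [h] <;> [exact G.hza _; exact G.hzb _]
    have d2 : z e.1.1 = σ (t'+1) := by
      rcases hu with h | h <;> rw [h] <;> [exact G.hza _; exact G.hzb _]
    rcases hcond with ⟨c1, c2⟩ | ⟨c1, c2⟩
    · have h1 : t' + 1 = t := G.hσ (d2.symm.trans c1)
      have h2 : t' = t + 1 := G.hσ (d1.symm.trans c2)
      exact absurd (by rw [show t + 2 = t' + 1 by rw [h2]; ring, h1]) (G.shift2_ne t)
    · have h1 : t' + 1 = t + 1 := G.hσ (d2.symm.trans c1)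
      have ht : t' = t := by exact add_right_cancel h1
      subst ht
      rcases hv with hv | hv <;> rcases hu with hu | hu
      · exact Or.inl (mkE_eq_of e _ (Or.inr ⟨hu, hv⟩))
      · exact Or.inr (Or.inl (mkE_eq_of e _ (Or.inr ⟨hu, hv⟩)))
      · exact Or.inr (Or.inr (Or.inl (mkE_eq_of e _ (Or.inr ⟨hu, hv⟩))))
      · exact Or.inr (Or.inr (Or.inr (mkE_eq_of e _ (Or.inr ⟨hu, hv⟩))))

/-- Color sum at a gap, for a vector supported correctly. -/
theorem colorSeqN_gap (G : Good n k κ z σ a b) (x : Edge n → ℕ) (t : ZMod κ)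
    (hz : ∀ e : Edge n, e ≠ mkE (a t) (a (t+1)) (G.aa1_ne t) →
        e ≠ mkE (a t) (b (t+1)) (G.ab_ne' _ _) →
        e ≠ mkE (b t) (a (t+1)) (G.ba_ne' _ _) →
        e ≠ mkE (b t) (b (t+1)) (G.bb1_ne t) →
        ((z e.1.1 = σ t ∧ z e.1.2 = σ (t+1)) ∨ (z e.1.1 = σ (t+1) ∧ z e.1.2 = σ t)) →
        x e = 0) :
    colorSeqN z x (σ t) (σ (t+1)) =
      entN x (a t) (a (t+1)) + entN x (a t) (b (t+1)) +
        entN x (b t) (a (t+1)) + entN x (b t) (b (t+1)) := by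
  unfold colorSeqN
  rw [G.sum_four t _ (fun e he1 he2 he3 he4 => by
    by_cases hcc : (z e.1.1 = σ t ∧ z e.1.2 = σ (t+1)) ∨ (z e.1.1 = σ (t+1) ∧ z e.1.2 = σ t)
    · rw [if_pos hcc]; exact hz e he1 he2 he3 he4 hcc
    · rw [if_neg hcc])]
  rw [if_pos (cond_mkE z (G.aa1_ne t) (G.hza t) (G.hza (t+1))),
      if_pos (cond_mkE z (G.ab_ne' _ _) (G.hza t) (G.hzb (t+1))),
      if_pos (cond_mkE z (G.ba_ne' _ _) (G.hzb t) (G.hza (t+1))),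
      if_pos (cond_mkE z (G.bb1_ne t) (G.hzb t) (G.hzb (t+1))),
      entN_mkE x (G.aa1_ne t), entN_mkE x (G.ab_ne' t (t+1)), entN_mkE x (G.ba_ne' t (t+1)), entN_mkE x (G.bb1_ne t)]

theorem colors_of_cases (G : Good n k κ z σ a b) {e : Edge n} {t' : ZMod κ}
    (h : ((e.1.1 = a t' ∨ e.1.1 = b t') ∧ (e.1.2 = a (t'+1) ∨ e.1.2 = b (t'+1))) ∨
      ((e.1.2 = a t' ∨ e.1.2 = b t') ∧ (e.1.1 = a (t'+1) ∨ e.1.1 = b (t'+1)))) :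
    (z e.1.1 = σ t' ∧ z e.1.2 = σ (t'+1)) ∨ (z e.1.2 = σ t' ∧ z e.1.1 = σ (t'+1)) := by
  rcases h with ⟨hu, hv⟩ | ⟨hv, hu⟩
  · exact Or.inl ⟨by rcases hu with h | h <;> rw [h] <;> [exact G.hza _; exact G.hzb _],
      by rcases hv with h | h <;> rw [h] <;> [exact G.hza _; exact G.hzb _]⟩
  · exact Or.inr ⟨by rcases hv with h | h <;> rw [h] <;> [exact G.hza _; exact G.hzb _],
      by rcases hu with h | h <;> rw [h] <;> [exact G.hza _; exact G.hzb _]⟩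

theorem patX_mem (G : Good n k κ z σ a b) {p q r s : ℕ}
    (h2 : p + q + r + s = 2) (h3 : p + r + p + q = 3) (h4 : q + s + r + s = 1)
    (hp : p ≤ 1) (hq : q ≤ 1) (hr : r ≤ 1) (hs : s ≤ 1) :
    patX a b p q r s ∈ SimpleFiber z (dFun a b) (cFun σ) := by
  refine ⟨⟨?_, ?_⟩, ?_⟩
  · intro u
    have hrow : degSeqN (patX a b p q r s) u = ∑ v, patA a b p q r s u v :=
      Finset.sum_congr rfl fun v _ => G.entN_patX p q r s u v
    by_cases h1 : ∃ t, u = a t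
    · obtain ⟨t, rfl⟩ := h1
      rw [hrow, G.rowsum_a, h3]
      unfold dFun
      rw [if_pos ⟨t, rfl⟩]
      norm_num
    · by_cases hbb : ∃ t, u = b t
      · obtain ⟨t, rfl⟩ := hbb
        rw [hrow, G.rowsum_b, h4]
        unfold dFun
        rw [if_neg h1, if_pos ⟨t, rfl⟩]
        norm_num
      · push_neg at h1 hbb
        rw [hrow, Finset.sum_eq_zero (fun v _ => G.patA_other h1 hbb v)]
        unfold dFun
        rw [if_neg (not_exists.mpr h1), if_neg (not_exists.mpr hbb)]
        norm_num
  · intro i j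
    have hgap : ∀ t : ZMod κ,
        colorSeqN z (patX a b p q r s) (σ t) (σ (t+1)) = p + q + r + s := by
      intro t
      rw [G.colorSeqN_gap _ t (fun e he1 he2 he3 he4 hcond => by
        show patA a b p q r s e.1.1 e.1.2 = 0
        by_contra hpa
        rcases G.gap_edge_cases hcond hpa with rfl | rfl | rfl | rfl
        exacts [he1 rfl, he2 rfl, he3 rfl, he4 rfl]),
        G.entN_patX, G.entN_patX, G.entN_patX, G.entN_patX,
        G.patA_aa, G.patA_ab, G.patA_ba, G.patA_bb]
    by_cases hc : ∃ t, (i = σ t ∧ j = σ (t+1)) ∨ (j = σ t ∧ i = σ (t+1))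
    · obtain ⟨t, hor⟩ := hc
      have hcf : cFun σ i j = 2 := by unfold cFun; rw [if_pos ⟨t, hor⟩]
      rw [hcf]
      rcases hor with ⟨rfl, rfl⟩ | ⟨rfl, rfl⟩
      · rw [hgap t, h2]; norm_num
      · rw [colorSeqN_symm, hgap t, h2]; norm_num
    · unfold cFun
      rw [if_neg hc]
      have h0 : colorSeqN z (patX a b p q r s) i j = 0 := by
        apply Finset.sum_eq_zero
        intro e _
        by_cases hcc : (z e.1.1 = i ∧ z e.1.2 = j) ∨ (z e.1.1 = j ∧ z e.1.2 = i)
        · rw [if_pos hcc]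
          by_contra hpa
          obtain ⟨t', hcase⟩ :=
            G.patA_ne_zero_cases (show patA a b p q r s e.1.1 e.1.2 ≠ 0 from hpa)
          rcases G.colors_of_cases hcase with ⟨d1, d2⟩ | ⟨d1, d2⟩ <;>
            rcases hcc with ⟨c1, c2⟩ | ⟨c1, c2⟩
          · exact hc ⟨t', Or.inl ⟨c1.symm.trans d1, c2.symm.trans d2⟩⟩
          · exact hc ⟨t', Or.inr ⟨c1.symm.trans d1, c2.symm.trans d2⟩⟩
          · exact hc ⟨t', Or.inr ⟨c2.symm.trans d1, c1.symm.trans d2⟩⟩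
          · exact hc ⟨t', Or.inl ⟨c2.symm.trans d1, c1.symm.trans d2⟩⟩
        · rw [if_neg hcc]
      rw [h0]
      norm_num
  · intro e
    show patA a b p q r s e.1.1 e.1.2 ≤ 1
    unfold patA
    split_ifs <;> omega

end Good

namespace Good

variable {n k κ : ℕ} {z : Fin n → Fin k} {σ : ZMod κ → Fin k} {a b : ZMod κ → Fin n}

theorem fiber_char (G : Good n k κ z σ a b) {y : Edge n → ℕ}
    (hy : y ∈ SimpleFiber z (dFun a b) (cFun σ)) :
    y = patX a b 1 1 0 0 ∨ y = patX a b 1 0 1 0 := by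
  classical
  obtain ⟨⟨hdeg, hcol⟩, hle⟩ := hy
  haveI := G.nz
  have hEnt_le : ∀ u v : Fin n, entN y u v ≤ 1 := by
    intro u v; unfold entN; split_ifs <;> first | exact hle _ | omega
  have hF1 : ∀ u : Fin n, (∀ t', u ≠ a t') → (∀ t', u ≠ b t') → ∀ v, entN y u v = 0 := by
    intro u hu1 hu2 v
    have hd : (degSeqN y u : ℤ) = 0 := by
      rw [hdeg u]; unfold dFun
      rw [if_neg (not_exists.mpr hu1), if_neg (not_exists.mpr hu2)]
    have hd0 : degSeqN y u = 0 := by exact_mod_cast hd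
    unfold degSeqN at hd0
    rw [Finset.sum_eq_zero_iff] at hd0
    exact hd0 v (Finset.mem_univ v)
  have hF2 : ∀ u v : Fin n, u ≠ v → cFun σ (z u) (z v) = 0 → entN y u v = 0 := by
    intro u v huv hc
    have h0 : (colorSeqN z y (z u) (z v) : ℤ) = 0 := by rw [hcol]; exact hc
    have h0' : colorSeqN z y (z u) (z v) = 0 := by exact_mod_cast h0
    unfold colorSeqN at h0'
    rw [Finset.sum_eq_zero_iff] at h0'
    have hterm := h0' (mkE u v huv) (Finset.mem_univ _)
    rw [if_pos (cond_mkE z huv rfl rfl)] at hterm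
    rw [← entN_mkE y huv]
    exact hterm
  have hCzero : ∀ s1 s2 : ZMod κ, s2 ≠ s1 + 1 → s1 ≠ s2 + 1 → cFun σ (σ s1) (σ s2) = 0 := by
    intro s1 s2 hn1 hn2
    unfold cFun
    rw [if_neg]
    rintro ⟨t, ⟨hx1, hx2⟩ | ⟨hx1, hx2⟩⟩
    · exact hn1 (by rw [G.hσ hx2, G.hσ hx1])
    · exact hn2 (by rw [G.hσ hx2, G.hσ hx1])
  have hOff : ∀ u v : Fin n, u ≠ v → ¬condAA a u v → ¬condAB a b u v → ¬condBA a b u v →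
      ¬condBB b u v → entN y u v = 0 := by
    intro u v huv h1 h2 h3 h4
    have tri : ∀ w : Fin n, (∃ t', w = a t') ∨ (∃ t', w = b t') ∨
        ((∀ t', w ≠ a t') ∧ (∀ t', w ≠ b t')) := by
      intro w
      by_cases ha' : ∃ t', w = a t'
      · exact Or.inl ha'
      · by_cases hb' : ∃ t', w = b t'
        · exact Or.inr (Or.inl hb')
        · push_neg at ha' hb'
          exact Or.inr (Or.inr ⟨ha', hb'⟩)
    rcases tri u with ⟨s1, rfl⟩ | ⟨s1, rfl⟩ | ⟨hu1, hu2⟩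
    · rcases tri v with ⟨s2, rfl⟩ | ⟨s2, rfl⟩ | ⟨hv1, hv2⟩
      · by_cases hc1 : s2 = s1 + 1
        · exact absurd ⟨s1, Or.inl ⟨rfl, by rw [hc1]⟩⟩ h1
        · by_cases hc2 : s1 = s2 + 1
          · exact absurd ⟨s2, Or.inr ⟨by rw [hc2], rfl⟩⟩ h1
          · exact hF2 _ _ huv (by rw [G.hza, G.hza]; exact hCzero s1 s2 hc1 hc2)
      · by_cases hc1 : s2 = s1 + 1
        · exact absurd ⟨s1, Or.inl ⟨rfl, by rw [hc1]⟩⟩ h2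
        · by_cases hc2 : s1 = s2 + 1
          · exact absurd ⟨s2, Or.inr ⟨rfl, by rw [hc2]⟩⟩ h3
          · exact hF2 _ _ huv (by rw [G.hza, G.hzb]; exact hCzero s1 s2 hc1 hc2)
      · rw [entN_comm]; exact hF1 v hv1 hv2 _
    · rcases tri v with ⟨s2, rfl⟩ | ⟨s2, rfl⟩ | ⟨hv1, hv2⟩
      · by_cases hc1 : s2 = s1 + 1
        · exact absurd ⟨s1, Or.inl ⟨rfl, by rw [hc1]⟩⟩ h3
        · by_cases hc2 : s1 = s2 + 1
          · exact absurd ⟨s2, Or.inr ⟨rfl, by rw [hc2]⟩⟩ h2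
          · exact hF2 _ _ huv (by rw [G.hzb, G.hza]; exact hCzero s1 s2 hc1 hc2)
      · by_cases hc1 : s2 = s1 + 1
        · exact absurd ⟨s1, Or.inl ⟨rfl, by rw [hc1]⟩⟩ h4
        · by_cases hc2 : s1 = s2 + 1
          · exact absurd ⟨s2, Or.inr ⟨by rw [hc2], rfl⟩⟩ h4
          · exact hF2 _ _ huv (by rw [G.hzb, G.hzb]; exact hCzero s1 s2 hc1 hc2)
      · rw [entN_comm]; exact hF1 v hv1 hv2 _
    · exact hF1 _ hu1 hu2 v
  have hOff' : ∀ u v : Fin n, u ≠ v → patA a b 1 1 1 1 u v = 0 → entN y u v = 0 := by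
    intro u v huv h0
    unfold patA at h0
    split_ifs at h0 with h1 h2 h3 h4 <;>
      first
      | exact absurd h0 one_ne_zero
      | exact hOff u v huv h1 h2 h3 h4
  let P : ZMod κ → ℕ := fun t => entN y (a t) (a (t+1))
  let Q : ZMod κ → ℕ := fun t => entN y (a t) (b (t+1))
  let R : ZMod κ → ℕ := fun t => entN y (b t) (a (t+1))
  let S : ZMod κ → ℕ := fun t => entN y (b t) (b (t+1))
  have hPle : ∀ t, P t ≤ 1 := fun t => hEnt_le _ _
  have hQle : ∀ t, Q t ≤ 1 := fun t => hEnt_le _ _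
  have hRle : ∀ t, R t ≤ 1 := fun t => hEnt_le _ _
  have hSle : ∀ t, S t ≤ 1 := fun t => hEnt_le _ _
  have hE1 : ∀ t : ZMod κ, P (t-1) + R (t-1) + P t + Q t = 3 := by
    intro t
    have hsupp : ∀ v : Fin n,
        v ∉ ({a (t-1), b (t-1), a (t+1), b (t+1)} : Finset (Fin n)) →
        entN y (a t) v = 0 := by
      intro v hv
      by_cases hveq : v = a t
      · subst hveq; exact entN_self y _
      · refine hOff' _ _ (fun h => hveq h.symm) ?_
        by_contra hpa
        rcases G.neighbor_a hpa with rfl | rfl | rfl | rfl <;> simp at hv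
    have hd : (degSeqN y (a t) : ℤ) = 3 := by
      rw [hdeg]; unfold dFun; rw [if_pos ⟨t, rfl⟩]
    have hd0 : degSeqN y (a t) = 3 := by exact_mod_cast hd
    unfold degSeqN at hd0
    rw [G.sum_T t (fun v => entN y (a t) v) hsupp] at hd0
    have c1 : entN y (a t) (a (t-1)) = P (t-1) := by
      show _ = entN y (a (t-1)) (a (t-1+1))
      rw [show t - 1 + 1 = t by ring, entN_comm]
    have c2 : entN y (a t) (b (t-1)) = R (t-1) := by
      show _ = entN y (b (t-1)) (a (t-1+1))
      rw [show t - 1 + 1 = t by ring, entN_comm]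
    rw [c1, c2] at hd0
    exact hd0
  have hE3 : ∀ t : ZMod κ, P t + Q t + R t + S t = 2 := by
    intro t
    have hsupp : ∀ e : Edge n, e ≠ mkE (a t) (a (t+1)) (G.aa1_ne t) →
        e ≠ mkE (a t) (b (t+1)) (G.ab_ne' _ _) →
        e ≠ mkE (b t) (a (t+1)) (G.ba_ne' _ _) →
        e ≠ mkE (b t) (b (t+1)) (G.bb1_ne t) →
        ((z e.1.1 = σ t ∧ z e.1.2 = σ (t+1)) ∨ (z e.1.1 = σ (t+1) ∧ z e.1.2 = σ t)) →
        y e = 0 := by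
      intro e he1 he2 he3 he4 hcond
      rw [app_eq_entN y e]
      refine hOff' _ _ (ne_of_lt e.2) ?_
      by_contra hpa
      rcases G.gap_edge_cases hcond hpa with rfl | rfl | rfl | rfl
      exacts [he1 rfl, he2 rfl, he3 rfl, he4 rfl]
    have hc2 : (colorSeqN z y (σ t) (σ (t+1)) : ℤ) = 2 := by
      rw [hcol]; unfold cFun; rw [if_pos ⟨t, Or.inl ⟨rfl, rfl⟩⟩]
    have hc2' : colorSeqN z y (σ t) (σ (t+1)) = 2 := by exact_mod_cast hc2
    rw [G.colorSeqN_gap y t hsupp] at hc2'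
    exact hc2'
  have hfun : ∀ p q r s : ℕ, (∀ t, P t = p) → (∀ t, Q t = q) → (∀ t, R t = r) →
      (∀ t, S t = s) → y = patX a b p q r s := by
    intro p q r s hP hQ hR hS
    funext e
    rw [app_eq_entN y e]
    show _ = patA a b p q r s e.1.1 e.1.2
    have huv : e.1.1 ≠ e.1.2 := ne_of_lt e.2
    unfold patA
    split_ifs with h1 h2 h3 h4
    · rcases h1 with ⟨s', ⟨hx1, hx2⟩ | ⟨hx1, hx2⟩⟩
      · rw [hx1, hx2]; exact hP s'
      · rw [hx1, hx2, entN_comm]; exact hP s'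
    · rcases h2 with ⟨s', ⟨hx1, hx2⟩ | ⟨hx1, hx2⟩⟩
      · rw [hx1, hx2]; exact hQ s'
      · rw [hx1, hx2, entN_comm]; exact hQ s'
    · rcases h3 with ⟨s', ⟨hx1, hx2⟩ | ⟨hx1, hx2⟩⟩
      · rw [hx1, hx2]; exact hR s'
      · rw [hx1, hx2, entN_comm]; exact hR s'
    · rcases h4 with ⟨s', ⟨hx1, hx2⟩ | ⟨hx1, hx2⟩⟩
      · rw [hx1, hx2]; exact hS s'
      · rw [hx1, hx2, entN_comm]; exact hS s'
    · exact hOff _ _ huv h1 h2 h3 h4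
  by_cases hall : ∀ t, P t + Q t ≤ 1
  · have hPR : ∀ t, P t = 1 ∧ R t = 1 := by
      intro t
      have h1 := hE1 (t+1)
      rw [show t + 1 - 1 = t by ring] at h1
      have h2 := hall (t+1)
      have h3 := hPle t
      have h4 := hRle t
      omega
    have hQ0 : ∀ t, Q t = 0 := by
      intro t; have := hall t; have := (hPR t).1; omega
    have hS0 : ∀ t, S t = 0 := by
      intro t; have := hE3 t; have h := hPR t; have := hQ0 t; omega
    exact Or.inr (hfun 1 0 1 0 (fun t => (hPR t).1) hQ0 (fun t => (hPR t).2) hS0)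
  · push_neg at hall
    obtain ⟨t₀, ht₀⟩ := hall
    have hbase : P t₀ = 1 ∧ Q t₀ = 1 := by
      have := hPle t₀; have := hQle t₀; omega
    have hstep : ∀ t, P t = 1 ∧ Q t = 1 → P (t+1) = 1 ∧ Q (t+1) = 1 := by
      intro t hpq
      have h3 := hE3 t
      have h1 := hE1 (t+1)
      rw [show t + 1 - 1 = t by ring] at h1
      have := hPle (t+1); have := hQle (t+1)
      omega
    have hiter : ∀ m : ℕ, P (t₀ + (m : ZMod κ)) = 1 ∧ Q (t₀ + (m : ZMod κ)) = 1 := by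
      intro m
      induction m with
      | zero => simpa using hbase
      | succ i ih =>
        have h := hstep (t₀ + (i : ZMod κ)) ih
        rwa [show (t₀ + (i : ZMod κ)) + 1 = t₀ + ((i+1 : ℕ) : ZMod κ) by push_cast; ring] at h
    have hPQ : ∀ t, P t = 1 ∧ Q t = 1 := by
      intro t
      have hm : t = t₀ + ((t - t₀).val : ZMod κ) := by
        rw [ZMod.natCast_rightInverse (t - t₀)]
        ring
      rw [hm]; exact hiter _
    have hR0 : ∀ t, R t = 0 := by
      intro t; have := hE3 t; have := hPQ t; omega
    have hS0 : ∀ t, S t = 0 := by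
      intro t; have := hE3 t; have := hPQ t; omega
    exact Or.inl (hfun 1 1 0 0 (fun t => (hPQ t).1) (fun t => (hPQ t).2) hR0 hS0)

end Good

theorem double_count {n : ℕ} (g : Fin n → Fin n → ℕ) (hsym : ∀ u v, g u v = g v u)
    (hdiag : ∀ u, g u u = 0) :
    ∑ u, ∑ v, g u v = 2 * ∑ e : Edge n, g e.1.1 e.1.2 := by
  classical
  have h1 : ∑ u, ∑ v, g u v = ∑ p ∈ Finset.univ ×ˢ Finset.univ, g p.1 p.2 := by
    rw [Finset.sum_product]
  rw [h1, ← Finset.sum_filter_add_sum_filter_not (Finset.univ ×ˢ Finset.univ)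
      (fun p : Fin n × Fin n => p.1 < p.2)]
  have h2 : ∑ p ∈ Finset.filter (fun p : Fin n × Fin n => p.1 < p.2)
      (Finset.univ ×ˢ Finset.univ), g p.1 p.2 = ∑ e : Edge n, g e.1.1 e.1.2 := by
    apply Finset.sum_subtype
    intro p; simp
  have h3 : ∑ p ∈ Finset.filter (fun p : Fin n × Fin n => ¬ p.1 < p.2)
      (Finset.univ ×ˢ Finset.univ), g p.1 p.2
      = ∑ p ∈ Finset.filter (fun p : Fin n × Fin n => p.2 < p.1)
      (Finset.univ ×ˢ Finset.univ), g p.1 p.2 := by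
    symm
    apply Finset.sum_subset
    · intro p hp
      simp only [Finset.mem_filter] at hp ⊢
      exact ⟨hp.1, asymm hp.2⟩
    · intro p hp hnp
      simp only [Finset.mem_filter] at hp hnp
      have he : p.1 = p.2 := le_antisymm (le_of_not_gt (fun hh => hnp ⟨hp.1, hh⟩)) (le_of_not_gt hp.2)
      rw [he, hdiag]
  have h4 : ∑ p ∈ Finset.filter (fun p : Fin n × Fin n => p.2 < p.1)
      (Finset.univ ×ˢ Finset.univ), g p.1 p.2
      = ∑ p ∈ Finset.filter (fun p : Fin n × Fin n => p.1 < p.2)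
      (Finset.univ ×ˢ Finset.univ), g p.1 p.2 := by
    refine Finset.sum_equiv (Equiv.prodComm (Fin n) (Fin n)) ?_ ?_
    · intro p; simp [Finset.mem_filter]
    · intro p hp; exact hsym p.1 p.2
  rw [h2, h3, h4, h2]
  ring

namespace Good

variable {n k κ : ℕ} {z : Fin n → Fin k} {σ : ZMod κ → Fin k} {a b : ZMod κ → Fin n}

theorem sum_patX0110 (G : Good n k κ z σ a b) :
    ∑ e : Edge n, patX a b 0 1 1 0 e = 2 * κ := by
  classical
  haveI := G.nz
  have hdc := double_count (patA a b 0 1 1 0)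
    (fun u v => patA_comm a b 0 1 1 0 u v) (fun u => G.patA_self 0 1 1 0 u)
  have hrow : ∀ u : Fin n, ∑ v, patA a b 0 1 1 0 u v
      = (if (∃ t, u = a t) ∨ (∃ t, u = b t) then 2 else 0) := by
    intro u
    by_cases h1 : ∃ t, u = a t
    · obtain ⟨t, rfl⟩ := h1
      rw [G.rowsum_a, if_pos (Or.inl ⟨t, rfl⟩)]
    · by_cases h2 : ∃ t, u = b t
      · obtain ⟨t, rfl⟩ := h2
        rw [G.rowsum_b, if_pos (Or.inr ⟨t, rfl⟩)]
      · push_neg at h1 h2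
        rw [Finset.sum_eq_zero (fun v _ => G.patA_other h1 h2 v),
          if_neg (not_or.mpr ⟨not_exists.mpr h1, not_exists.mpr h2⟩)]
  have hcount : ∑ u : Fin n, (if (∃ t, u = a t) ∨ (∃ t, u = b t) then 2 else 0) = 4 * κ := by
    rw [← Finset.sum_filter]
    rw [Finset.sum_const]
    have hfil : Finset.univ.filter (fun u : Fin n => (∃ t, u = a t) ∨ (∃ t, u = b t))
        = Finset.univ.image a ∪ Finset.univ.image b := by
      ext u
      simp only [Finset.mem_filter, Finset.mem_univ, true_and, Finset.mem_union,
        Finset.mem_image]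
      constructor
      · rintro (⟨t, rfl⟩ | ⟨t, rfl⟩)
        · exact Or.inl ⟨t, rfl⟩
        · exact Or.inr ⟨t, rfl⟩
      · rintro (⟨t, rfl⟩ | ⟨t, rfl⟩)
        · exact Or.inl ⟨t, rfl⟩
        · exact Or.inr ⟨t, rfl⟩
    rw [hfil, Finset.card_union_of_disjoint, Finset.card_image_of_injective _ G.a_inj,
      Finset.card_image_of_injective _ G.b_inj, Finset.card_univ, ZMod.card]
    · ring
    · rw [Finset.disjoint_left]
      rintro u hu hv
      simp only [Finset.mem_image] at hu hv
      obtain ⟨t, _, rfl⟩ := hu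
      obtain ⟨t', _, he⟩ := hv
      exact G.ab_ne' t t' he.symm
  have := hdc
  rw [Finset.sum_congr rfl (fun u _ => hrow u), hcount] at this
  have hgoal : (∑ e : Edge n, patX a b 0 1 1 0 e)
      = ∑ e : Edge n, patA a b 0 1 1 0 e.1.1 e.1.2 := rfl
  rw [hgoal]
  omega

theorem norm_diff (G : Good n k κ z σ a b) :
    norm1 (diff (patX a b 1 1 0 0) (patX a b 1 0 1 0)) = 2 * (κ : ℤ) := by
  have hpt : ∀ e : Edge n, |((patX a b 1 1 0 0 e : ℕ) : ℤ) - ((patX a b 1 0 1 0 e : ℕ) : ℤ)|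
      = ((patX a b 0 1 1 0 e : ℕ) : ℤ) := by
    intro e
    show |((patA a b 1 1 0 0 e.1.1 e.1.2 : ℕ) : ℤ) - ((patA a b 1 0 1 0 e.1.1 e.1.2 : ℕ) : ℤ)|
      = ((patA a b 0 1 1 0 e.1.1 e.1.2 : ℕ) : ℤ)
    unfold patA
    split_ifs <;> norm_num
  unfold norm1 diff
  rw [Finset.sum_congr rfl (fun e _ => hpt e), ← Nat.cast_sum, G.sum_patX0110]
  push_cast
  ring

theorem X_ne_X' (G : Good n k κ z σ a b) : patX a b 1 1 0 0 ≠ patX a b 1 0 1 0 := by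
  intro h
  have h2 := congrFun h (mkE (a 0) (b (0+1)) (G.ab_ne' 0 (0+1)))
  rw [entN_mkE (patX a b 1 1 0 0) (G.ab_ne' 0 (0+1)), entN_mkE (patX a b 1 0 1 0) (G.ab_ne' 0 (0+1)), G.entN_patX, G.entN_patX, G.patA_ab, G.patA_ab] at h2
  exact one_ne_zero h2

end Good

/-- If `κ = #{i : |z⁻¹(i)| ≥ 2} ≥ 3`, then every simple-graph Markov basis
for `DC_{n,z}` contains an element of 1-norm exactly `2κ`. -/
theorem simple_markov_basis_large_element (n k : ℕ) (hn : 0 < n) (hk : 0 < k)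
    (z : Fin n → Fin k)
    (hκ : 3 ≤ (Finset.univ.filter fun i : Fin k =>
        2 ≤ (Finset.univ.filter fun u : Fin n => z u = i).card).card)
    (B : Set (Edge n → ℤ)) (hB : IsSimpleMarkovBasis z B) :
    ∃ γ ∈ B, norm1 γ =
      2 * ((Finset.univ.filter fun i : Fin k =>
        2 ≤ (Finset.univ.filter fun u : Fin n => z u = i).card).card : ℤ) := by
  classical
  set K := (Finset.univ.filter fun i : Fin k =>
      2 ≤ (Finset.univ.filter fun u : Fin n => z u = i).card) with hK
  set κ := K.card with hκdef
  haveI : NeZero κ := ⟨by omega⟩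
  have hcard : Fintype.card (ZMod κ) = Fintype.card {i // i ∈ K} := by
    rw [ZMod.card, Fintype.card_coe]
  have e : ZMod κ ≃ {i // i ∈ K} := Fintype.equivOfCardEq hcard
  set σ : ZMod κ → Fin k := fun t => (e t : Fin k) with hσdef
  have hσinj : Function.Injective σ := fun t t' h => e.injective (Subtype.ext h)
  have hex : ∀ t : ZMod κ, ∃ u v : Fin n, z u = σ t ∧ z v = σ t ∧ u ≠ v := by
    intro t
    have hmem : σ t ∈ K := (e t).2
    rw [hK, Finset.mem_filter] at hmem
    have h2 : 1 < (Finset.univ.filter fun u : Fin n => z u = σ t).card := hmem.2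
    rw [Finset.one_lt_card] at h2
    obtain ⟨u, hu, v, hv, huv⟩ := h2
    exact ⟨u, v, (Finset.mem_filter.mp hu).2, (Finset.mem_filter.mp hv).2, huv⟩
  choose af bf haf hbf hne using hex
  have G : Good n k κ z σ af bf := ⟨hκ, hσinj, haf, hbf, hne⟩
  obtain ⟨hBfin, hBker, hconn⟩ := hB
  have hx : patX af bf 1 1 0 0 ∈ SimpleFiber z (dFun af bf) (cFun σ) :=
    G.patX_mem (by norm_num) (by norm_num) (by norm_num) (by norm_num) (by norm_num)
      (by norm_num) (by norm_num)
  have hx' : patX af bf 1 0 1 0 ∈ SimpleFiber z (dFun af bf) (cFun σ) :=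
    G.patX_mem (by norm_num) (by norm_num) (by norm_num) (by norm_num) (by norm_num)
      (by norm_num) (by norm_num)
  have hpath := hconn (dFun af bf) (cFun σ) _ hx _ hx'
  have hkey : ∀ w, Relation.ReflTransGen
      (fun a' b' : Edge n → ℕ => a' ∈ SimpleFiber z (dFun af bf) (cFun σ) ∧
        b' ∈ SimpleFiber z (dFun af bf) (cFun σ) ∧ (diff a' b' ∈ B ∨ diff b' a' ∈ B))
      (patX af bf 1 1 0 0) w →
      patX af bf 1 1 0 0 = w ∨ ∃ u v : Edge n → ℕ, u ≠ v ∧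
        (u ∈ SimpleFiber z (dFun af bf) (cFun σ) ∧
          v ∈ SimpleFiber z (dFun af bf) (cFun σ) ∧ (diff u v ∈ B ∨ diff v u ∈ B)) := by
    intro w hw
    induction hw with
    | refl => exact Or.inl rfl
    | @tail w1 w2 h1 h2 ih =>
      rcases ih with heq | hfound
      · by_cases hww : w1 = w2
        · exact Or.inl (heq.trans hww)
        · exact Or.inr ⟨w1, w2, hww, h2⟩
      · exact Or.inr hfound
  rcases hkey _ hpath with heq | ⟨u, v, huvne, hu, hv, hBmem⟩
  · exact absurd heq G.X_ne_X'
  · have hnormcomm : ∀ x1 x2 : Edge n → ℕ, norm1 (diff x1 x2) = norm1 (diff x2 x1) := by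
      intro x1 x2
      unfold norm1 diff
      exact Finset.sum_congr rfl fun e' _ => abs_sub_comm _ _
    have hu2 := G.fiber_char hu
    have hv2 := G.fiber_char hv
    have hnormuv : norm1 (diff u v) = 2 * (κ : ℤ) := by
      rcases hu2 with rfl | rfl <;> rcases hv2 with rfl | rfl
      · exact absurd rfl huvne
      · exact G.norm_diff
      · rw [hnormcomm]; exact G.norm_diff
      · exact absurd rfl huvne
    rcases hBmem with hm | hm
    · exact ⟨diff u v, hm, hnormuv⟩
    · exact ⟨diff v u, hm, by rw [hnormcomm]; exact hnormuv⟩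
end

section
/- Let n and k be positive integers and z a k-coloring of {1,…,n}. For every γ ∈ ker_ℤ DC_{n,z} and every w ∈ {1,…,n}, the contraction σ_w(γ) also lies in ker_ℤ DC_{n,z}. -/
open Finset

/-- Entry at `(u,v)` of the contraction `σ_w(γ)` with respect to `w` and `z`. -/
def contractEnt {n k : ℕ} (z : Fin n → Fin k) (w : Fin n) (γ : Edge n → ℤ)
    (u v : Fin n) : ℤ :=
  if z u ≠ z w ∧ z v ≠ z w then ent γ u v
  else if u = w ∧ z v ≠ z w then
    ∑ u' ∈ Finset.univ.filter (fun u' => z u' = z w), ent γ u' v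
  else if v = w ∧ z u ≠ z w then
    ∑ v' ∈ Finset.univ.filter (fun v' => z v' = z w), ent γ u v'
  else 0

/-- The contraction `σ_w(γ) ∈ ℤ^P` of `γ` with respect to `w` and `z`. -/
def contract {n k : ℕ} (z : Fin n → Fin k) (w : Fin n) (γ : Edge n → ℤ) :
    Edge n → ℤ :=
  fun e => contractEnt z w γ e.1.1 e.1.2

section Helpers
variable {n k : ℕ}

lemma ent_symm (γ : Edge n → ℤ) (u v : Fin n) : ent γ u v = ent γ v u := by
  unfold ent
  rcases lt_trichotomy u v with h | h | h
  · rw [dif_pos h, dif_neg (asymm h), dif_pos h]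
  · subst h; simp
  · rw [dif_neg (asymm h), dif_pos h, dif_pos h]

lemma ent_self (γ : Edge n → ℤ) (u : Fin n) : ent γ u u = 0 := by
  simp [ent]

lemma ent_edge (γ : Edge n → ℤ) (e : Edge n) : ent γ e.1.1 e.1.2 = γ e := by
  unfold ent
  rw [dif_pos e.2]

lemma contractEnt_self (z : Fin n → Fin k) (w : Fin n) (γ : Edge n → ℤ) (u : Fin n) :
    contractEnt z w γ u u = 0 := by
  unfold contractEnt
  split_ifs with h1 h2
  · exact ent_self γ u
  · exact absurd (h2.1 ▸ rfl : z u = z w) h2.2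
  · rfl

lemma contractEnt_symm (z : Fin n → Fin k) (w : Fin n) (γ : Edge n → ℤ) (u v : Fin n) :
    contractEnt z w γ u v = contractEnt z w γ v u := by
  unfold contractEnt
  split_ifs <;>
    first
      | rfl
      | exact ent_symm γ u v
      | exact Finset.sum_congr rfl fun x _ => ent_symm γ x v
      | exact Finset.sum_congr rfl fun x _ => ent_symm γ u x
      | simp_all

lemma ent_contract (z : Fin n → Fin k) (w : Fin n) (γ : Edge n → ℤ) (u v : Fin n) :
    ent (contract z w γ) u v = contractEnt z w γ u v := by
  unfold ent contract
  rcases lt_trichotomy u v with h | h | h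
  · rw [dif_pos h]
  · subst h
    rw [dif_neg (lt_irrefl u), dif_neg (lt_irrefl u), contractEnt_self]
  · rw [dif_neg (asymm h), dif_pos h]
    exact contractEnt_symm z w γ v u

end Helpers
section DoubleSum
variable {n k : ℕ}

lemma double_sum_eq (f : Fin n → Fin n → ℤ) (hs : ∀ u v, f u v = f v u)
    (hd : ∀ u, f u u = 0) :
    ∑ u, ∑ v, f u v = 2 * ∑ e : Edge n, f e.1.1 e.1.2 := by
  have h1 : ∑ e : Edge n, f e.1.1 e.1.2
      = ∑ p ∈ univ.filter (fun p : Fin n × Fin n => p.1 < p.2), f p.1 p.2 :=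
    (Finset.sum_subtype _ (by simp) (fun p : Fin n × Fin n => f p.1 p.2)).symm
  have h2 : ∑ u, ∑ v, f u v = ∑ p : Fin n × Fin n, f p.1 p.2 :=
    (Fintype.sum_prod_type (fun p : Fin n × Fin n => f p.1 p.2)).symm
  have h3 : ∑ p ∈ univ.filter (fun p : Fin n × Fin n => ¬ p.1 < p.2), f p.1 p.2
      = ∑ p ∈ univ.filter (fun p : Fin n × Fin n => p.2 < p.1), f p.1 p.2 := by
    refine (Finset.sum_subset ?_ ?_).symm
    · intro p hp
      simp only [Finset.mem_filter, Finset.mem_univ, true_and] at *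
      exact not_lt.mpr hp.le
    · intro p hp hp2
      simp only [Finset.mem_filter, Finset.mem_univ, true_and] at *
      have h : p.1 = p.2 := le_antisymm (not_lt.mp hp2) (not_lt.mp hp)
      rw [h]
      exact hd p.2
  have h4 : ∑ p ∈ univ.filter (fun p : Fin n × Fin n => p.2 < p.1), f p.1 p.2
      = ∑ p ∈ univ.filter (fun p : Fin n × Fin n => p.1 < p.2), f p.1 p.2 := by
    apply Finset.sum_nbij' (fun p => (p.2, p.1)) (fun p => (p.2, p.1)) <;>
      simp +contextual [hs]
  rw [h1, h2, ← Finset.sum_filter_add_sum_filter_not univ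
      (fun p : Fin n × Fin n => p.1 < p.2) (fun p => f p.1 p.2), h3, h4]
  ring

end DoubleSum
section Color
variable {n k : ℕ}

lemma cond_symm (z : Fin n → Fin k) (i j : Fin k) (u v : Fin n) :
    ((z u = i ∧ z v = j) ∨ (z u = j ∧ z v = i)) ↔
      ((z v = i ∧ z u = j) ∨ (z v = j ∧ z u = i)) := by tauto

lemma two_mul_colorSeq (z : Fin n → Fin k) (γ : Edge n → ℤ) (i j : Fin k) :
    ∑ u, ∑ v, (if (z u = i ∧ z v = j) ∨ (z u = j ∧ z v = i) then ent γ u v else 0)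
      = 2 * colorSeq z γ i j := by
  rw [double_sum_eq]
  · congr 1
    unfold colorSeq
    refine Finset.sum_congr rfl fun e _ => ?_
    by_cases h : (z e.1.1 = i ∧ z e.1.2 = j) ∨ (z e.1.1 = j ∧ z e.1.2 = i)
    · rw [if_pos h, if_pos h, ent_edge]
    · rw [if_neg h, if_neg h]
  · intro u v
    by_cases h : (z u = i ∧ z v = j) ∨ (z u = j ∧ z v = i)
    · rw [if_pos h, if_pos ((cond_symm z i j u v).mp h), ent_symm]
    · rw [if_neg h, if_neg (fun h' => h ((cond_symm z i j v u).mp h'))]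
  · intro u
    by_cases h : (z u = i ∧ z u = j) ∨ (z u = j ∧ z u = i)
    · rw [if_pos h, ent_self]
    · rw [if_neg h]

lemma colorSeq_comm (z : Fin n → Fin k) (γ : Edge n → ℤ) (i j : Fin k) :
    colorSeq z γ i j = colorSeq z γ j i :=
  Finset.sum_congr rfl fun _ _ => if_congr or_comm rfl rfl

end Color
section Deg
variable {n k : ℕ}

lemma deg_contract (z : Fin n → Fin k) (w : Fin n) (γ : Edge n → ℤ) (hγ : inKer z γ)
    (u : Fin n) : degSeq (contract z w γ) u = 0 := by
  have hent : degSeq (contract z w γ) u = ∑ v, contractEnt z w γ u v :=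
    Finset.sum_congr rfl fun v _ => ent_contract z w γ u v
  rw [hent]
  by_cases hq : z u = z w
  · by_cases hw : u = w
    · subst hw
      have step : ∀ v : Fin n, contractEnt z u γ u v
          = if z v = z u then 0
            else ∑ u' ∈ Finset.univ.filter (fun u' => z u' = z u), ent γ u' v := by
        intro v
        unfold contractEnt
        by_cases hv : z v = z u
        · rw [if_pos hv, if_neg (fun h => h.1 rfl), if_neg (fun h => h.2 hv),
            if_neg (fun h => h.2 rfl)]
        · rw [if_neg hv, if_neg (fun h => h.1 rfl), if_pos ⟨rfl, hv⟩]
      simp only [step]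
      rw [Finset.sum_ite, Finset.sum_const_zero, zero_add, Finset.sum_comm]
      have hsplit : ∀ u' : Fin n,
          ∑ v ∈ Finset.univ.filter (fun v => ¬ z v = z u), ent γ u' v
            = - ∑ v ∈ Finset.univ.filter (fun v => z v = z u), ent γ u' v := by
        intro u'
        have h0 := Finset.sum_filter_add_sum_filter_not Finset.univ
          (fun v => z v = z u) (ent γ u')
        have hdeg := hγ.1 u'
        unfold degSeq at hdeg
        linarith
      rw [Finset.sum_congr rfl fun u' _ => hsplit u', Finset.sum_neg_distrib, neg_eq_zero]
      have h2c := two_mul_colorSeq z γ (z u) (z u)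
      rw [hγ.2 (z u) (z u), mul_zero] at h2c
      have key : (∑ u' : Fin n, ∑ v : Fin n,
            (if (z u' = z u ∧ z v = z u) ∨ (z u' = z u ∧ z v = z u) then ent γ u' v else 0))
          = ∑ u' ∈ Finset.univ.filter (fun u' => z u' = z u),
              ∑ v ∈ Finset.univ.filter (fun v => z v = z u), ent γ u' v := by
        rw [Finset.sum_filter]
        refine Finset.sum_congr rfl fun u' _ => ?_
        by_cases h : z u' = z u
        · rw [if_pos h, Finset.sum_filter]
          refine Finset.sum_congr rfl fun v _ => ?_
          by_cases hv : z v = z u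
          · rw [if_pos (Or.inl ⟨h, hv⟩), if_pos hv]
          · rw [if_neg (fun hh => hh.elim (fun a => hv a.2) (fun a => hv a.2)), if_neg hv]
        · rw [if_neg h]
          exact Finset.sum_eq_zero fun v _ =>
            if_neg (fun hh => hh.elim (fun a => h a.1) (fun a => h a.1))
      rw [← key]
      exact h2c
    · refine Finset.sum_eq_zero fun v _ => ?_
      unfold contractEnt
      rw [if_neg (fun h => h.1 hq), if_neg (fun h => hw h.1), if_neg (fun h => h.2 hq)]
  · have step : ∀ v : Fin n, contractEnt z w γ u v
        = if z v = z w then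
            (if v = w then ∑ v' ∈ Finset.univ.filter (fun v' => z v' = z w), ent γ u v'
             else 0)
          else ent γ u v := by
      intro v
      unfold contractEnt
      by_cases hv : z v = z w
      · rw [if_pos hv, if_neg (fun h => h.2 hv), if_neg (fun h => h.2 hv)]
        by_cases hvw : v = w
        · rw [if_pos ⟨hvw, hq⟩, if_pos hvw]
        · rw [if_neg (fun h => hvw h.1), if_neg hvw]
      · rw [if_neg hv, if_pos ⟨hq, hv⟩]
    simp only [step]
    rw [Finset.sum_ite,
      Finset.sum_ite_eq' (Finset.univ.filter (fun v => z v = z w)) w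
        (fun _ => ∑ v' ∈ Finset.univ.filter (fun v' => z v' = z w), ent γ u v'),
      if_pos (by simp)]
    have h0 := Finset.sum_filter_add_sum_filter_not Finset.univ (fun v => z v = z w) (ent γ u)
    have hdeg := hγ.1 u
    unfold degSeq at hdeg
    linarith

end Deg
section ColorCase
variable {n k : ℕ}

lemma color_contract_case (z : Fin n → Fin k) (w : Fin n) (γ : Edge n → ℤ)
    (hγ : inKer z γ) (j : Fin k) (hj : ¬ j = z w) :
    2 * colorSeq z (contract z w γ) (z w) j = 0 := by
  -- the basic cancellation: sum of `ent γ` over `S × J` vanishes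
  have base : ∑ u ∈ Finset.univ.filter (fun x : Fin n => z x = z w),
      ∑ v ∈ Finset.univ.filter (fun x : Fin n => z x = j), ent γ u v = 0 := by
    have h2 := two_mul_colorSeq z γ (z w) j
    rw [hγ.2 (z w) j, mul_zero] at h2
    have hsplit : ∀ u v : Fin n,
        (if (z u = z w ∧ z v = j) ∨ (z u = j ∧ z v = z w) then ent γ u v else 0)
          = (if z u = z w ∧ z v = j then ent γ u v else 0)
            + (if z u = j ∧ z v = z w then ent γ u v else 0) := by
      intro u v
      by_cases ha : z u = z w ∧ z v = j
      · have hb : ¬ (z u = j ∧ z v = z w) := fun hb => hj (ha.1.symm.trans hb.1).symm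
        rw [if_pos (Or.inl ha), if_pos ha, if_neg hb, add_zero]
      · by_cases hb : z u = j ∧ z v = z w
        · rw [if_pos (Or.inr hb), if_neg ha, if_pos hb, zero_add]
        · rw [if_neg (fun h => h.elim ha hb), if_neg ha, if_neg hb, add_zero]
    have e1 : ∑ u : Fin n, ∑ v : Fin n,
          (if (z u = z w ∧ z v = j) ∨ (z u = j ∧ z v = z w) then ent γ u v else 0)
        = (∑ u : Fin n, ∑ v : Fin n, (if z u = z w ∧ z v = j then ent γ u v else 0))
          + (∑ u : Fin n, ∑ v : Fin n, (if z u = j ∧ z v = z w then ent γ u v else 0)) := by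
      rw [← Finset.sum_add_distrib]
      refine Finset.sum_congr rfl fun u _ => ?_
      rw [← Finset.sum_add_distrib]
      exact Finset.sum_congr rfl fun v _ => hsplit u v
    rw [e1] at h2
    have e2 : ∑ u : Fin n, ∑ v : Fin n, (if z u = z w ∧ z v = j then ent γ u v else 0)
        = ∑ u ∈ Finset.univ.filter (fun x : Fin n => z x = z w),
            ∑ v ∈ Finset.univ.filter (fun x : Fin n => z x = j), ent γ u v := by
      rw [Finset.sum_filter]
      refine Finset.sum_congr rfl fun u _ => ?_
      by_cases h : z u = z w
      · rw [if_pos h, Finset.sum_filter]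
        refine Finset.sum_congr rfl fun v _ => ?_
        by_cases hv : z v = j
        · rw [if_pos ⟨h, hv⟩, if_pos hv]
        · rw [if_neg (fun hh => hv hh.2), if_neg hv]
      · rw [if_neg h]
        exact Finset.sum_eq_zero fun v _ => if_neg (fun hh => h hh.1)
    have e3 : ∑ u : Fin n, ∑ v : Fin n, (if z u = j ∧ z v = z w then ent γ u v else 0)
        = ∑ u ∈ Finset.univ.filter (fun x : Fin n => z x = z w),
            ∑ v ∈ Finset.univ.filter (fun x : Fin n => z x = j), ent γ u v := by
      have e3' : ∑ u : Fin n, ∑ v : Fin n, (if z u = j ∧ z v = z w then ent γ u v else 0)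
          = ∑ u ∈ Finset.univ.filter (fun x : Fin n => z x = j),
              ∑ v ∈ Finset.univ.filter (fun x : Fin n => z x = z w), ent γ u v := by
        rw [Finset.sum_filter]
        refine Finset.sum_congr rfl fun u _ => ?_
        by_cases h : z u = j
        · rw [if_pos h, Finset.sum_filter]
          refine Finset.sum_congr rfl fun v _ => ?_
          by_cases hv : z v = z w
          · rw [if_pos ⟨h, hv⟩, if_pos hv]
          · rw [if_neg (fun hh => hv hh.2), if_neg hv]
        · rw [if_neg h]
          exact Finset.sum_eq_zero fun v _ => if_neg (fun hh => h hh.1)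
      rw [e3', Finset.sum_comm]
      exact Finset.sum_congr rfl fun a _ => Finset.sum_congr rfl fun b _ => ent_symm γ b a
    rw [e2, e3] at h2
    linarith
  rw [← two_mul_colorSeq z (contract z w γ) (z w) j]
  have hsplit2 : ∀ u v : Fin n,
      (if (z u = z w ∧ z v = j) ∨ (z u = j ∧ z v = z w)
          then ent (contract z w γ) u v else 0)
        = (if u = w ∧ z v = j then
              ∑ u' ∈ Finset.univ.filter (fun x : Fin n => z x = z w), ent γ u' v else 0)
          + (if z u = j ∧ v = w then
              ∑ v' ∈ Finset.univ.filter (fun x : Fin n => z x = z w), ent γ u v' else 0) := by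
    intro u v
    rw [ent_contract]
    by_cases h1 : u = w ∧ z v = j
    · obtain ⟨rfl, hv⟩ := h1
      have hvne : z v ≠ z u := fun hh => hj (hv.symm.trans hh)
      rw [if_pos (Or.inl ⟨rfl, hv⟩), if_pos ⟨rfl, hv⟩,
        if_neg (fun h => hj h.1.symm), add_zero]
      unfold contractEnt
      rw [if_neg (fun h => h.1 rfl), if_pos ⟨rfl, hvne⟩]
    · by_cases h2 : z u = j ∧ v = w
      · obtain ⟨hu, rfl⟩ := h2
        have hune : z u ≠ z v := fun hh => hj (hu.symm.trans hh)
        rw [if_pos (Or.inr ⟨hu, rfl⟩), if_neg h1, if_pos ⟨hu, rfl⟩, zero_add]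
        unfold contractEnt
        rw [if_neg (fun h => h.2 rfl), if_neg (fun h => h.2 rfl), if_pos ⟨rfl, hune⟩]
      · rw [if_neg h1, if_neg h2, add_zero]
        by_cases hc : (z u = z w ∧ z v = j) ∨ (z u = j ∧ z v = z w)
        · rw [if_pos hc]
          unfold contractEnt
          rcases hc with ⟨hu, hv⟩ | ⟨hu, hv⟩
          · have huw : u ≠ w := fun h => h1 ⟨h, hv⟩
            rw [if_neg (fun h => h.1 hu), if_neg (fun h => huw h.1),
              if_neg (fun h => h.2 hu)]
          · have hvw : v ≠ w := fun h => h2 ⟨hu, h⟩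
            rw [if_neg (fun h => h.2 hv), if_neg (fun h => h.2 hv),
              if_neg (fun h => hvw h.1)]
        · rw [if_neg hc]
  have partA : ∑ u : Fin n, ∑ v : Fin n,
      (if u = w ∧ z v = j then
        ∑ u' ∈ Finset.univ.filter (fun x : Fin n => z x = z w), ent γ u' v else 0) = 0 := by
    have inner : ∀ u : Fin n,
        (∑ v : Fin n, if u = w ∧ z v = j then
          ∑ u' ∈ Finset.univ.filter (fun x : Fin n => z x = z w), ent γ u' v else 0)
        = if u = w then
            ∑ v ∈ Finset.univ.filter (fun x : Fin n => z x = j),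
              ∑ u' ∈ Finset.univ.filter (fun x : Fin n => z x = z w), ent γ u' v
          else 0 := by
      intro u
      by_cases hu : u = w
      · rw [if_pos hu, Finset.sum_filter]
        refine Finset.sum_congr rfl fun v _ => ?_
        by_cases hv : z v = j
        · rw [if_pos ⟨hu, hv⟩, if_pos hv]
        · rw [if_neg (fun h => hv h.2), if_neg hv]
      · rw [if_neg hu]
        exact Finset.sum_eq_zero fun v _ => if_neg (fun h => hu h.1)
    simp only [inner]
    rw [Finset.sum_ite_eq' Finset.univ w
      (fun _ => ∑ v ∈ Finset.univ.filter (fun x : Fin n => z x = j),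
        ∑ u' ∈ Finset.univ.filter (fun x : Fin n => z x = z w), ent γ u' v),
      if_pos (Finset.mem_univ w), Finset.sum_comm]
    exact base
  have partB : ∑ u : Fin n, ∑ v : Fin n,
      (if z u = j ∧ v = w then
        ∑ v' ∈ Finset.univ.filter (fun x : Fin n => z x = z w), ent γ u v' else 0) = 0 := by
    have inner : ∀ u : Fin n,
        (∑ v : Fin n, if z u = j ∧ v = w then
          ∑ v' ∈ Finset.univ.filter (fun x : Fin n => z x = z w), ent γ u v' else 0)
        = if z u = j then
            ∑ v' ∈ Finset.univ.filter (fun x : Fin n => z x = z w), ent γ u v'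
          else 0 := by
      intro u
      by_cases hu : z u = j
      · rw [if_pos hu]
        have hv : ∀ v : Fin n,
            (if z u = j ∧ v = w then
              ∑ v' ∈ Finset.univ.filter (fun x : Fin n => z x = z w), ent γ u v' else 0)
            = (if v = w then
              ∑ v' ∈ Finset.univ.filter (fun x : Fin n => z x = z w), ent γ u v' else 0) := by
          intro v
          by_cases hvw : v = w
          · rw [if_pos ⟨hu, hvw⟩, if_pos hvw]
          · rw [if_neg (fun h => hvw h.2), if_neg hvw]
        simp only [hv]
        rw [Finset.sum_ite_eq' Finset.univ w
          (fun _ => ∑ v' ∈ Finset.univ.filter (fun x : Fin n => z x = z w), ent γ u v'),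
          if_pos (Finset.mem_univ w)]
      · rw [if_neg hu]
        exact Finset.sum_eq_zero fun v _ => if_neg (fun h => hu h.1)
    simp only [inner]
    rw [← Finset.sum_filter]
    have flip : ∑ u ∈ Finset.univ.filter (fun x : Fin n => z x = j),
        ∑ v ∈ Finset.univ.filter (fun x : Fin n => z x = z w), ent γ u v
        = ∑ v ∈ Finset.univ.filter (fun x : Fin n => z x = z w),
            ∑ u ∈ Finset.univ.filter (fun x : Fin n => z x = j), ent γ v u := by
      rw [Finset.sum_comm]
      exact Finset.sum_congr rfl fun a _ => Finset.sum_congr rfl fun b _ => ent_symm γ b a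
    rw [flip]
    exact base
  calc ∑ u : Fin n, ∑ v : Fin n,
        (if (z u = z w ∧ z v = j) ∨ (z u = j ∧ z v = z w)
          then ent (contract z w γ) u v else 0)
      = (∑ u : Fin n, ∑ v : Fin n,
          (if u = w ∧ z v = j then
            ∑ u' ∈ Finset.univ.filter (fun x : Fin n => z x = z w), ent γ u' v else 0))
        + (∑ u : Fin n, ∑ v : Fin n,
          (if z u = j ∧ v = w then
            ∑ v' ∈ Finset.univ.filter (fun x : Fin n => z x = z w), ent γ u v' else 0)) := by
        rw [← Finset.sum_add_distrib]
        refine Finset.sum_congr rfl fun u _ => ?_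
        rw [← Finset.sum_add_distrib]
        exact Finset.sum_congr rfl fun v _ => hsplit2 u v
    _ = 0 := by rw [partA, partB, add_zero]

end ColorCase
/-- The contraction of a kernel element lies again in the kernel:
`σ_w(ker_ℤ DC_{n,z}) ⊆ ker_ℤ DC_{n,z}`. -/
theorem contract_mem_ker (n k : ℕ) (hn : 0 < n) (hk : 0 < k)
    (z : Fin n → Fin k) (γ : Edge n → ℤ) (hγ : inKer z γ) (w : Fin n) :
    inKer z (contract z w γ) := by
  constructor
  · exact fun u => deg_contract z w γ hγ u
  · intro i j
    by_cases hi : i = z w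
    · by_cases hj : j = z w
      · subst hi; subst hj
        unfold colorSeq
        refine Finset.sum_eq_zero fun e _ => ?_
        by_cases hc : (z e.1.1 = z w ∧ z e.1.2 = z w) ∨ (z e.1.1 = z w ∧ z e.1.2 = z w)
        · rw [if_pos hc]
          have hc' : z e.1.1 = z w ∧ z e.1.2 = z w := hc.elim id id
          show contractEnt z w γ e.1.1 e.1.2 = 0
          unfold contractEnt
          rw [if_neg (fun h => h.1 hc'.1), if_neg (fun h => h.2 hc'.2),
            if_neg (fun h => h.2 hc'.1)]
        · rw [if_neg hc]
      · subst hi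
        have h := color_contract_case z w γ hγ j hj
        linarith
    · by_cases hj : j = z w
      · subst hj
        rw [colorSeq_comm]
        have h := color_contract_case z w γ hγ i hi
        linarith
      · have h1 := two_mul_colorSeq z (contract z w γ) i j
        have h2 := two_mul_colorSeq z γ i j
        have he : ∀ u v : Fin n,
            (if (z u = i ∧ z v = j) ∨ (z u = j ∧ z v = i)
              then ent (contract z w γ) u v else 0)
            = (if (z u = i ∧ z v = j) ∨ (z u = j ∧ z v = i) then ent γ u v else 0) := by
          intro u v
          by_cases hc : (z u = i ∧ z v = j) ∨ (z u = j ∧ z v = i)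
          · rw [if_pos hc, if_pos hc, ent_contract]
            have hu : z u ≠ z w := by
              rcases hc with ⟨h, _⟩ | ⟨h, _⟩
              · exact fun hh => hi (h.symm.trans hh)
              · exact fun hh => hj (h.symm.trans hh)
            have hv : z v ≠ z w := by
              rcases hc with ⟨_, h⟩ | ⟨_, h⟩
              · exact fun hh => hj (h.symm.trans hh)
              · exact fun hh => hi (h.symm.trans hh)
            unfold contractEnt
            rw [if_pos ⟨hu, hv⟩]
          · rw [if_neg hc, if_neg hc]
        have heq : (2 : ℤ) * colorSeq z (contract z w γ) i j = 2 * colorSeq z γ i j := by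
          rw [← h1, ← h2]
          exact Finset.sum_congr rfl fun u _ => Finset.sum_congr rfl fun v _ => he u v
        rw [hγ.2 i j, mul_zero] at heq
        linarith
end
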